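/- A-sequence recurrence for the compression of a double almost-Riordan array: Suppose Ã ∈ K[[t]] satisfies f₁·f₂ = t²·(Ã∘(f₁f₂)), and set a_j := [t^j]Ã. Let d̂_{n,k} := d_{2n−k,k} for 0 ≤ k ≤ n and d̂_{n,k} := 0 for k > n. Then for all n ≥ 2 and all k ≥ 3, d̂_{n,k} = a₀·d̂_{n−2,k−2} + a₁·d̂_{n−1,k} + a₂·d̂_{n,k+2} + ⋯ = Σ_{j≥0} a_j·d̂_{n+j−2, k+2(j−1)}, where the sum has only finitely many nonzero terms (the terms vanish once k+2(j−1) > n+j−2). -/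

import Mathlib

open PowerSeries

variable {K : Type*} [Field K]

/-- Formal substitution `U ∘ h` of a power series `h` (intended with `h(0) = 0`)
into a power series `U`:  `[tⁿ](U∘h) = Σ_{j≤n} ([tʲ]U)·[tⁿ](hʲ)`. -/
noncomputable def psComp (U h : PowerSeries K) : PowerSeries K :=
  PowerSeries.mk fun n => ∑ j ∈ Finset.range (n + 1), coeff j U * coeff n (h ^ j)

/-- The `(n,k)` entry of the double almost-Riordan array `(b | g ; f₁, f₂)`:
column 0 is `b`, column `2ℓ+1` is `t·g·(f₁f₂)^ℓ`, column `2ℓ+2` is `t·g·f₁·(f₁f₂)^ℓ`. -/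
noncomputable def dar (b g f₁ f₂ : PowerSeries K) (n k : ℕ) : K :=
  if k = 0 then coeff n b
  else if k % 2 = 1 then coeff n (X * g * (f₁ * f₂) ^ ((k - 1) / 2))
  else coeff n (X * g * f₁ * (f₁ * f₂) ^ ((k - 2) / 2))

/-- The compression of the double almost-Riordan array: `d̂_{n,k} = d_{2n−k,k}` for `k ≤ n`,
and `0` otherwise. -/
noncomputable def darHat (b g f₁ f₂ : PowerSeries K) (n k : ℕ) : K :=
  if k ≤ n then dar b g f₁ f₂ (2 * n - k) k else 0

/-! Column `k + 2` of the array is column `k` times `f₁f₂ = t²·(Ã∘(f₁f₂))`, so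
`d̂_{n,k} = [t^{2n-k}] col_k = Σⱼ aⱼ·[t^{2n-k-2}] (col_{k-2}·(f₁f₂)ʲ)`, and
`col_{k-2}·(f₁f₂)ʲ = col_{k+2j-2}`, whose coefficient of `t^{2n-k-2}` is exactly
`d̂_{n+j-2,k+2j-2}`: going down the A-sequence, the row index of the compressed array grows by
one while the column index grows by two, which keeps `2n - k` fixed. -/

noncomputable def darColumn (g f₁ f₂ : PowerSeries K) (k : ℕ) : PowerSeries K :=
  X * g * (if k % 2 = 1 then 1 else f₁) * (f₁ * f₂) ^ ((k - 1) / 2)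

section darColumn

variable {g f₁ f₂ : PowerSeries K}

lemma dar_eq_coeff_darColumn (b : PowerSeries K) (n : ℕ) {k : ℕ} (hk : k ≠ 0) :
    dar b g f₁ f₂ n k = coeff n (darColumn g f₁ f₂ k) := by
  unfold dar darColumn
  rcases Nat.mod_two_eq_zero_or_one k with h | h
  · simp [hk, h, show (k - 2) / 2 = (k - 1) / 2 by omega]
  · simp [hk, h]

lemma darColumn_add_two {k : ℕ} (hk : k ≠ 0) :
    darColumn g f₁ f₂ (k + 2) = darColumn g f₁ f₂ k * (f₁ * f₂) := by
  simp only [darColumn, Nat.add_mod_right, show (k + 2 - 1) / 2 = (k - 1) / 2 + 1 by omega,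
    pow_succ, mul_assoc]

lemma darColumn_add_two_mul {k : ℕ} (hk : k ≠ 0) (j : ℕ) :
    darColumn g f₁ f₂ (k + 2 * j) = darColumn g f₁ f₂ k * (f₁ * f₂) ^ j := by
  induction j with
  | zero => simp
  | succ j ih =>
    rw [show k + 2 * (j + 1) = k + 2 * j + 2 by ring, darColumn_add_two (by omega), ih,
      pow_succ, mul_assoc]

lemma X_pow_dvd_darColumn (hF : X ^ 2 ∣ f₁ * f₂) (k : ℕ) :
    X ^ (2 * ((k - 1) / 2) + 1) ∣ darColumn g f₁ f₂ k := by
  rw [pow_succ', pow_mul]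
  exact mul_dvd_mul (dvd_mul_of_dvd_left (dvd_mul_right X g) _) (pow_dvd_pow_of_dvd hF _)

/-- Above the diagonal (`n < k`) both sides vanish, since column `k` has order at least
`k - 1 > 2 * n - k`. -/
lemma darHat_eq_coeff_darColumn (b : PowerSeries K) (hF : X ^ 2 ∣ f₁ * f₂) (n : ℕ) {k : ℕ}
    (hk : k ≠ 0) : darHat b g f₁ f₂ n k = coeff (2 * n - k) (darColumn g f₁ f₂ k) := by
  unfold darHat
  split_ifs with hkn
  · exact dar_eq_coeff_darColumn b _ hk
  · exact (X_pow_dvd_iff.mp (X_pow_dvd_darColumn hF k) _ (by omega)).symm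

end darColumn

lemma coeff_psComp_of_lt {A F : PowerSeries K} (hF : constantCoeff F = 0) {i N : ℕ}
    (hi : i < N) :
    coeff i (psComp A F) = ∑ j ∈ Finset.range N, coeff j A * coeff i (F ^ j) := by
  rw [psComp, coeff_mk]
  refine Finset.sum_subset (Finset.range_subset_range.mpr hi) fun j _ hj => ?_
  have hij : i < j := by simpa using hj
  rw [X_pow_dvd_iff.mp (pow_dvd_pow_of_dvd (X_dvd_iff.mpr hF) j) i hij, mul_zero]

lemma coeff_mul_psComp (u A : PowerSeries K) {F : PowerSeries K} (hF : constantCoeff F = 0)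
    (m : ℕ) : coeff m (u * psComp A F) =
      ∑ j ∈ Finset.range (m + 1), coeff j A * coeff m (u * F ^ j) := by
  have hcomp : ∀ p : ℕ × ℕ, p.2 ≤ m → coeff p.1 u * coeff p.2 (psComp A F) =
      ∑ j ∈ Finset.range (m + 1), coeff j A * (coeff p.1 u * coeff p.2 (F ^ j)) := by
    intro p hp
    rw [coeff_psComp_of_lt hF (Nat.lt_succ_of_le hp), Finset.mul_sum]
    exact Finset.sum_congr rfl fun _ _ => by ring
  rw [coeff_mul, Finset.sum_congr rfl fun p hp =>
      hcomp p (Finset.HasAntidiagonal.antidiagonal.snd_le hp), Finset.sum_comm]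
  exact Finset.sum_congr rfl fun j _ => by rw [coeff_mul, Finset.mul_sum]

theorem darHat_A_seq_general
    (b g f₁ f₂ : PowerSeries K)
    (A : PowerSeries K)
    (hA : f₁ * f₂ = X ^ 2 * psComp A (f₁ * f₂)) :
    ∀ n k : ℕ, 2 ≤ n → 3 ≤ k →
      darHat b g f₁ f₂ n k =
        ∑ᶠ j : ℕ, coeff j A * darHat b g f₁ f₂ (n + j - 2) (k + 2 * j - 2) := by
  intro n k hn hk
  set F := f₁ * f₂
  have hF : X ^ 2 ∣ F := hA ▸ dvd_mul_right _ _
  have hF0 : constantCoeff F = 0 := X_dvd_iff.mp ((dvd_pow_self X two_ne_zero).trans hF)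
  by_cases hkn : k ≤ n
  · obtain ⟨m, hm⟩ : ∃ m, 2 * n - k = m + 2 := ⟨2 * n - k - 2, by omega⟩
    have hterm : ∀ j, darHat b g f₁ f₂ (n + j - 2) (k + 2 * j - 2) =
        coeff m (darColumn g f₁ f₂ (k - 2) * F ^ j) := fun j => by
      rw [darHat_eq_coeff_darColumn b hF _ (by omega), show k + 2 * j - 2 = k - 2 + 2 * j by omega,
        darColumn_add_two_mul (by omega), show 2 * (n + j - 2) - (k - 2 + 2 * j) = m by omega]
    have hcol : darColumn g f₁ f₂ k = X ^ 2 * (darColumn g f₁ f₂ (k - 2) * psComp A F) := by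
      rw [show k = k - 2 + 2 by omega, darColumn_add_two (by omega), Nat.add_sub_cancel]
      linear_combination darColumn g f₁ f₂ (k - 2) * hA
    rw [darHat_eq_coeff_darColumn b hF _ (by omega), hm, hcol, coeff_X_pow_mul,
      coeff_mul_psComp _ _ hF0, finsum_eq_finsetSum_of_support_subset _ (s := .range (m + 1))]
    · simp only [hterm]
    · refine Function.support_subset_iff'.mpr fun j hj => ?_
      have hmj : m < j := by simpa using hj
      have hFj : X ^ (2 * j) ∣ F ^ j := by rw [pow_mul]; exact pow_dvd_pow_of_dvd hF j
      rw [hterm, X_pow_dvd_iff.mp (hFj.trans (dvd_mul_left _ _)) m (by omega), mul_zero]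
  · rw [darHat, if_neg hkn, finsum_eq_zero_of_forall_eq_zero fun j => by
      rw [darHat, if_neg (by omega), mul_zero]]

/-- A-sequence recurrence for the compression of a double almost-Riordan array. -/
theorem darHat_A_seq
    (b g f₁ f₂ : PowerSeries K)
    (hbe : ∀ k, coeff (2 * k + 1) b = 0)
    (hge : ∀ k, coeff (2 * k + 1) g = 0)
    (hb0 : constantCoeff b ≠ 0)
    (hg0 : constantCoeff g ≠ 0)
    (hf₁o : ∀ k, coeff (2 * k) f₁ = 0)
    (hf₂o : ∀ k, coeff (2 * k) f₂ = 0)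
    (hf₁1 : coeff 1 f₁ ≠ 0)
    (hf₂1 : coeff 1 f₂ ≠ 0)
    (A : PowerSeries K)
    (hA : f₁ * f₂ = X ^ 2 * psComp A (f₁ * f₂)) :
    ∀ n k : ℕ, 2 ≤ n → 3 ≤ k →
      darHat b g f₁ f₂ n k =
        ∑ᶠ j : ℕ, coeff j A * darHat b g f₁ f₂ (n + j - 2) (k + 2 * j - 2) :=
  darHat_A_seq_general b g f₁ f₂ A hA
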